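/- For positive integers n and r with r ≤ n(n−1)/2, one has (1 + n/r)^r ≤ e^n, and hence the number of permutations of {1,...,n} with at most r inversions is at most e^n (1 + r/n)^n. -/

import Mathlib

/-!
A permutation `π` of `Fin n` is determined by its Lehmer code `cᵢ = #{j > i | π j < π i}`:
`π i` is the element of rank `cᵢ` among the values not taken by `π` before `i`. The code sums
to the number of inversions, so permutations with at most `r` inversions inject into vectors in
`ℕⁿ` with sum at most `r`; adding a slack coordinate, stars and bars counts these as `C(n + r, r)`.
Picking the term `nⁿ rʳ` in the binomial expansion of `(n + r)^(n + r)` gives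
`C(n + r, r) ≤ (1 + r/n)ⁿ (1 + n/r)ʳ`, and `1 + x ≤ eˣ` gives `(1 + n/r)ʳ ≤ eⁿ`.
-/

open Finset

/-- Number of inversions of a permutation. -/
def inversions {n : ℕ} (π : Equiv.Perm (Fin n)) : ℕ :=
  (Finset.univ.filter (fun q : Fin n × Fin n => q.1 < q.2 ∧ π q.2 < π q.1)).card

theorem Finset.injOn_card_filter_lt {α : Type*} [LinearOrder α] (s : Finset α) :
    Set.InjOn (fun x => #{y ∈ s | y < x}) s := by
  refine StrictMonoOn.injOn fun x hx y _ hxy => card_lt_card ?_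
  refine (ssubset_iff_of_subset fun z hz => ?_).2 ⟨x, mem_filter.2 ⟨hx, hxy⟩, by simp⟩
  rw [mem_filter] at hz ⊢
  exact ⟨hz.1, hz.2.trans hxy⟩

theorem Finset.card_le_choose_of_forall_sum_le {ι : Type*} [Fintype ι] {r : ℕ}
    (s : Finset (ι → ℕ)) (hs : ∀ c ∈ s, ∑ i, c i ≤ r) :
    #s ≤ (Fintype.card ι + r).choose r := by
  classical
  let withSlack : s → Sym (Option ι) r := fun c =>
    (Sym.equivNatSumOfFintype (Option ι) r).symm
      ⟨fun o => o.elim (r - ∑ i, c.1 i) c.1, by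
        simp only [Fintype.sum_option, Option.elim_none, Option.elim_some]
        have := hs c.1 c.2
        omega⟩
  have hinj : Function.Injective withSlack := by
    intro c d h
    have h' := congrArg Subtype.val ((Sym.equivNatSumOfFintype (Option ι) r).symm.injective h)
    exact Subtype.ext (funext fun i => congrFun h' (some i))
  calc #s = Fintype.card s := (Fintype.card_coe s).symm
    _ ≤ Fintype.card (Sym (Option ι) r) := Fintype.card_le_of_injective withSlack hinj
    _ = (Fintype.card ι + r).choose r := by
      rw [Sym.card_sym_eq_choose, Fintype.card_option, Nat.add_right_comm, Nat.add_sub_cancel]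

section LehmerCode

variable {n : ℕ}

def lehmerCode (π : Equiv.Perm (Fin n)) (i : Fin n) : ℕ :=
  #{j | i < j ∧ π j < π i}

theorem sum_lehmerCode (π : Equiv.Perm (Fin n)) : ∑ i, lehmerCode π i = inversions π := by
  simp only [lehmerCode, inversions, card_filter, Fintype.sum_prod_type]

theorem lehmerCode_eq_card_filter_lt (π : Equiv.Perm (Fin n)) (i : Fin n) :
    lehmerCode π i = #{x ∈ ((Iio i).image π)ᶜ | x < π i} := by
  refine card_equiv π fun j => ?_
  simp only [mem_filter, mem_univ, true_and, mem_compl, mem_image, mem_Iio,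
    EmbeddingLike.apply_eq_iff_eq, exists_eq_right, not_lt]
  constructor
  · exact fun h => ⟨h.1.le, h.2⟩
  · rintro ⟨hij, hlt⟩
    exact ⟨hij.lt_of_ne (by rintro rfl; exact lt_irrefl _ hlt), hlt⟩

theorem lehmerCode_injective : Function.Injective (lehmerCode (n := n)) := by
  intro π σ h
  refine Equiv.ext fun i => ?_
  induction i using WellFoundedLT.induction with
  | ind i ih =>
    have hprefix : (Iio i).image π = (Iio i).image σ :=
      image_congr fun j hj => ih j (mem_Iio.1 hj)
    have hmem : ∀ τ : Equiv.Perm (Fin n), τ i ∈ ((Iio i).image τ)ᶜ := by simp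
    refine injOn_card_filter_lt _ (hmem π) (hprefix ▸ hmem σ) ?_
    have hcode := congrFun h i
    rwa [lehmerCode_eq_card_filter_lt, lehmerCode_eq_card_filter_lt, ← hprefix] at hcode

theorem card_filter_inversions_le_choose (r : ℕ) :
    #{π : Equiv.Perm (Fin n) | inversions π ≤ r} ≤ (n + r).choose r := by
  rw [← card_image_of_injective _ lehmerCode_injective]
  refine (card_le_choose_of_forall_sum_le _ fun c hc => ?_).trans_eq (by rw [Fintype.card_fin])
  obtain ⟨π, hπ, rfl⟩ := mem_image.1 hc
  simpa [sum_lehmerCode] using hπ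

end LehmerCode

theorem choose_mul_pow_mul_pow_le_add_pow {R : Type*} [CommSemiring R] [PartialOrder R]
    [IsOrderedRing R] {x y : R} (hx : 0 ≤ x) (hy : 0 ≤ y) (m n : ℕ) :
    (m + n).choose m * (x ^ m * y ^ n) ≤ (x + y) ^ (m + n) := by
  rw [add_pow]
  convert single_le_sum (f := fun k => x ^ k * y ^ (m + n - k) * (m + n).choose k)
    (fun k _ => by positivity) (mem_range.2 (by omega : m < m + n + 1)) using 1
  simp only [Nat.add_sub_cancel_left]
  ring

theorem choose_le_one_add_div_pow_mul (m n : ℕ) :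
    ((m + n).choose m : ℝ) ≤ (1 + n / m) ^ m * (1 + m / n) ^ n := by
  rcases Nat.eq_zero_or_pos m with rfl | hm
  · simp
  rcases Nat.eq_zero_or_pos n with rfl | hn
  · simp
  have hbinom := choose_mul_pow_mul_pow_le_add_pow (R := ℝ) m.cast_nonneg n.cast_nonneg m n
  have hexpand : (1 + n / m : ℝ) ^ m * (1 + m / n) ^ n = (m + n) ^ (m + n) / (m ^ m * n ^ n) := by
    rw [one_add_div (by positivity), one_add_div (by positivity), div_pow, div_pow, pow_add,
      add_comm (n : ℝ)]
    field_simp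
  rw [hexpand, le_div_iff₀ (by positivity)]
  exact hbinom

theorem one_add_div_pow_le_exp {x : ℝ} {k : ℕ} (hx : -k ≤ x) :
    (1 + x / k) ^ k ≤ Real.exp x := by
  simpa [neg_div] using Real.one_sub_div_pow_le_exp_neg (n := k) (t := -x) (by linarith)

theorem card_kendall_ball_le_exp_general (n r : ℕ) :
    (1 + (n : ℝ) / r) ^ r ≤ Real.exp n
    ∧ ((Finset.univ.filter (fun π : Equiv.Perm (Fin n) => inversions π ≤ r)).card : ℝ)
        ≤ Real.exp n * (1 + (r : ℝ) / n) ^ n := by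
  have hexp : (1 + (n : ℝ) / r) ^ r ≤ Real.exp n := one_add_div_pow_le_exp <|
    (neg_nonpos.2 r.cast_nonneg).trans n.cast_nonneg
  refine ⟨hexp, ?_⟩
  calc ((Finset.univ.filter (fun π : Equiv.Perm (Fin n) => inversions π ≤ r)).card : ℝ)
      ≤ (n + r).choose n := by
        rw [Nat.choose_symm_add]
        exact_mod_cast card_filter_inversions_le_choose r
    _ ≤ (1 + r / n) ^ n * (1 + n / r) ^ r := choose_le_one_add_div_pow_mul n r
    _ ≤ (1 + r / n) ^ n * Real.exp n := by gcongr
    _ = Real.exp n * (1 + r / n) ^ n := mul_comm _ _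

/-- (1 + n/r)^r ≤ e^n, hence the number of permutations with at most r inversions is
at most e^n (1 + r/n)^n. -/
theorem card_kendall_ball_le_exp (n r : ℕ) (hn : 0 < n) (hr : 0 < r)
    (hr2 : r ≤ n * (n - 1) / 2) :
    (1 + (n : ℝ) / r) ^ r ≤ Real.exp n
    ∧ ((Finset.univ.filter (fun π : Equiv.Perm (Fin n) => inversions π ≤ r)).card : ℝ)
        ≤ Real.exp n * (1 + (r : ℝ) / n) ^ n :=
  card_kendall_ball_le_exp_general n r
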